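/- arXiv:0812.3060 — 4 statements merged into one kernel-verified Lean document; each statement's English description precedes it below -/
import Mathlib

section
/- The derivative of the rescaled family is a Poisson 2-cocycle with zero linearization: Let π be a Poisson bivector field on an open set U ⊆ ℝ^m with 0 ∈ U and π(0) = 0. Then the bivector field π̇₁, defined by π̇₁^{ij}(x) = Σ_k x_k ∂_k π^{ij}(x) − π^{ij}(x), satisfies: (1) π̇₁ is a Poisson 2-cocycle for π on U, i.e. Σ_l ( π^{li} ∂_l π̇₁^{jk} + π^{lj} ∂_l π̇₁^{ki} + π^{lk} ∂_l π̇₁^{ij} + π̇₁^{li} ∂_l π^{jk} + π̇₁^{lj} ∂_l π^{ki} + π̇₁^{lk} ∂_l π^{ij} ) = 0 on U for all i,j,k; and (2) π̇₁ has zero linearization at the origin: π̇₁(0) = 0 and ∂_p π̇₁^{ij}(0) = 0 for all p, i, j. -/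
open scoped Topology

/-- Partial derivative in the `l`-th coordinate direction of `f : ℝ^m → ℝ` at `x`. -/
noncomputable def pd {m : ℕ} (l : Fin m) (f : (Fin m → ℝ) → ℝ) (x : Fin m → ℝ) : ℝ :=
  fderiv ℝ f x (Pi.single l 1)

/-- A smooth bivector field on `U ⊆ ℝ^m`: a smooth matrix-valued map which is antisymmetric. -/
def IsSmoothBivectorOn {m : ℕ} (U : Set (Fin m → ℝ))
    (π : (Fin m → ℝ) → Matrix (Fin m) (Fin m) ℝ) : Prop :=
  (∀ i j, ContDiffOn ℝ (⊤ : ℕ∞) (fun x => π x i j) U) ∧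
  ∀ x ∈ U, ∀ i j, π x i j = - π x j i

/-- A Poisson bivector field on `U`: a smooth bivector field satisfying the Jacobi identity. -/
def IsPoissonOn {m : ℕ} (U : Set (Fin m → ℝ))
    (π : (Fin m → ℝ) → Matrix (Fin m) (Fin m) ℝ) : Prop :=
  IsSmoothBivectorOn U π ∧
  ∀ x ∈ U, ∀ i j k, ∑ l,
      (π x l i * pd l (fun y => π y j k) x +
       π x l j * pd l (fun y => π y k i) x +
       π x l k * pd l (fun y => π y i j) x) = 0

/-- The Lie derivative of a bivector field `π` along a vector field `X`. -/
noncomputable def lieDeriv {m : ℕ} (X : (Fin m → ℝ) → (Fin m → ℝ))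
    (π : (Fin m → ℝ) → Matrix (Fin m) (Fin m) ℝ) :
    (Fin m → ℝ) → Matrix (Fin m) (Fin m) ℝ :=
  fun x => Matrix.of fun i j => ∑ l,
    (X x l * pd l (fun y => π y i j) x
      - π x l j * pd l (fun y => X y i) x
      - π x i l * pd l (fun y => X y j) x)

/-- Structure constants `c^k_{ij} = ∂_k π^{ij}(0)` of `π` at `0`. -/
noncomputable def structConst {m : ℕ} (π : (Fin m → ℝ) → Matrix (Fin m) (Fin m) ℝ)
    (k i j : Fin m) : ℝ :=
  pd k (fun y => π y i j) 0

/-- The linear part of `π` at `0`: `π_lin^{ij}(y) = Σ_k c^k_{ij} y_k`. -/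
noncomputable def linPart {m : ℕ} (π : (Fin m → ℝ) → Matrix (Fin m) (Fin m) ℝ) :
    (Fin m → ℝ) → Matrix (Fin m) (Fin m) ℝ :=
  fun y => Matrix.of fun i j => ∑ k, structConst π k i j * y k

/-- The bracket of the isotropy Lie algebra `𝔤 = ℝ^m`, `[e_i,e_j] = Σ_k c^k_{ij} e_k`. -/
noncomputable def isoBracket {m : ℕ} (π : (Fin m → ℝ) → Matrix (Fin m) (Fin m) ℝ)
    (a b : Fin m → ℝ) : Fin m → ℝ :=
  fun k => ∑ i, ∑ j, a i * b j * structConst π k i j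

/-- The matrix of `ad_a = [a, ·]` on the isotropy Lie algebra. -/
noncomputable def adMatrix {m : ℕ} (π : (Fin m → ℝ) → Matrix (Fin m) (Fin m) ℝ)
    (a : Fin m → ℝ) : Matrix (Fin m) (Fin m) ℝ :=
  Matrix.of fun k j => ∑ i, a i * structConst π k i j

/-- The Killing form of the isotropy Lie algebra is negative definite. -/
noncomputable def KillingNegDef {m : ℕ} (π : (Fin m → ℝ) → Matrix (Fin m) (Fin m) ℝ) : Prop :=
  ∀ a : Fin m → ℝ, a ≠ 0 → Matrix.trace (adMatrix π a * adMatrix π a) < 0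

/-- The coadjoint action `(ad*_a ξ)(b) = -ξ([a,b])` of `𝔤` on `𝔤* = ℝ^m`. -/
noncomputable def coad {m : ℕ} (π : (Fin m → ℝ) → Matrix (Fin m) (Fin m) ℝ)
    (a ξ : Fin m → ℝ) : Fin m → ℝ :=
  fun j => - ∑ k, ξ k * ∑ i, a i * structConst π k i j

/-- `θ` is a Poisson 2-cocycle for `π` on `U'`. -/
def IsPoisson2CocycleOn {m : ℕ} (U' : Set (Fin m → ℝ))
    (π θ : (Fin m → ℝ) → Matrix (Fin m) (Fin m) ℝ) : Prop :=
  IsSmoothBivectorOn U' θ ∧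
  ∀ x ∈ U', ∀ i j k, ∑ l,
      (π x l i * pd l (fun y => θ y j k) x +
       π x l j * pd l (fun y => θ y k i) x +
       π x l k * pd l (fun y => θ y i j) x +
       θ x l i * pd l (fun y => π y j k) x +
       θ x l j * pd l (fun y => π y k i) x +
       θ x l k * pd l (fun y => π y i j) x) = 0

/-- `θ` is exact on `V'`: `θ = -L_Y π` for a smooth vector field `Y` on `V'`. -/
def IsExactOn {m : ℕ} (V' : Set (Fin m → ℝ))
    (π θ : (Fin m → ℝ) → Matrix (Fin m) (Fin m) ℝ) : Prop :=
  ∃ Y : (Fin m → ℝ) → (Fin m → ℝ), ContDiffOn ℝ (⊤ : ℕ∞) Y V' ∧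
    ∀ x ∈ V', ∀ i j, θ x i j = - lieDeriv Y π x i j

/-- The local second Poisson cohomology of `π` at `0` vanishes. -/
def LocalH2VanishesAt0 {m : ℕ} (U : Set (Fin m → ℝ))
    (π : (Fin m → ℝ) → Matrix (Fin m) (Fin m) ℝ) : Prop :=
  ∀ U' : Set (Fin m → ℝ), IsOpen U' → 0 ∈ U' → U' ⊆ U →
    ∀ θ : (Fin m → ℝ) → Matrix (Fin m) (Fin m) ℝ, IsPoisson2CocycleOn U' π θ →
      ∃ V' : Set (Fin m → ℝ), IsOpen V' ∧ 0 ∈ V' ∧ V' ⊆ U' ∧ IsExactOn V' π θ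

/-- `π̇₁^{ij}(x) = Σ_k x_k ∂_k π^{ij}(x) - π^{ij}(x)`. -/
noncomputable def piDot {m : ℕ} (π : (Fin m → ℝ) → Matrix (Fin m) (Fin m) ℝ) :
    (Fin m → ℝ) → Matrix (Fin m) (Fin m) ℝ :=
  fun x => Matrix.of fun i j => (∑ k, x k * pd k (fun y => π y i j) x) - π x i j

/-- `π` is linearizable at `0`. -/
def IsLinearizableAt0 {m : ℕ} (U : Set (Fin m → ℝ))
    (π : (Fin m → ℝ) → Matrix (Fin m) (Fin m) ℝ) : Prop :=
  ∃ (V W : Set (Fin m → ℝ)) (φ ψ : (Fin m → ℝ) → (Fin m → ℝ)),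
    IsOpen V ∧ IsOpen W ∧ (0 : Fin m → ℝ) ∈ V ∧ (0 : Fin m → ℝ) ∈ W ∧ V ⊆ U ∧
    ContDiffOn ℝ (⊤ : ℕ∞) φ V ∧ ContDiffOn ℝ (⊤ : ℕ∞) ψ W ∧
    φ '' V = W ∧ (∀ x ∈ V, ψ (φ x) = x) ∧ (∀ y ∈ W, φ (ψ y) = y) ∧
    φ 0 = 0 ∧
    ∀ x ∈ V, ∀ i j,
      ∑ k, ∑ l, pd k (fun y => φ y i) x * π x k l * pd l (fun y => φ y j) x
        = linPart π (φ x) i j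

namespace PiDotAux

variable {m : ℕ} {U : Set (Fin m → ℝ)} {f g a b : (Fin m → ℝ) → ℝ} {x : Fin m → ℝ} {l p q : Fin m}

lemma pd_congr (h : f =ᶠ[𝓝 x] g) : pd l f x = pd l g x := by
  unfold pd; rw [h.fderiv_eq]

lemma contDiffOn_pd (hU : IsOpen U) (hf : ContDiffOn ℝ (⊤ : ℕ∞) f U) (l : Fin m) :
    ContDiffOn ℝ (⊤ : ℕ∞) (pd l f) U :=
  (hf.fderiv_of_isOpen hU (by simp)).clm_apply contDiffOn_const

lemma diffAt (hU : IsOpen U) (hf : ContDiffOn ℝ (⊤ : ℕ∞) f U) (hx : x ∈ U) :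
    DifferentiableAt ℝ f x :=
  (hf.contDiffAt (hU.mem_nhds hx)).differentiableAt (by simp)

lemma pd_comm (hU : IsOpen U) (hf : ContDiffOn ℝ (⊤ : ℕ∞) f U) (hx : x ∈ U) (l p : Fin m) :
    pd l (pd p f) x = pd p (pd l f) x := by
  have h : ContDiffAt ℝ (⊤ : ℕ∞) f x := hf.contDiffAt (hU.mem_nhds hx)
  have hs := h.isSymmSndFDerivAt (by rw [minSmoothness_of_isRCLikeNormedField]; exact WithTop.coe_le_coe.mpr (le_top : (2 : ℕ∞) ≤ ⊤))
  have hd : DifferentiableAt ℝ (fderiv ℝ f) x :=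
    (h.fderiv_right (m := 1) (by exact WithTop.coe_le_coe.mpr (le_top : ((1 + 1 : ℕ) : ℕ∞) ≤ ⊤))).differentiableAt one_ne_zero
  have key : ∀ u w : Fin m, pd u (pd w f) x
      = fderiv ℝ (fderiv ℝ f) x (Pi.single u 1) (Pi.single w 1) := by
    intro u w
    show fderiv ℝ (fun y => (fderiv ℝ f y) (Pi.single w 1)) x (Pi.single u 1) = _
    rw [fderiv_clm_apply hd (differentiableAt_const _)]
    simp
  rw [key, key, hs]

lemma pd_mul (ha : DifferentiableAt ℝ a x) (hb : DifferentiableAt ℝ b x) (q : Fin m) :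
    pd q (fun y => a y * b y) x = a x * pd q b x + b x * pd q a x := by
  unfold pd; rw [fderiv_fun_mul ha hb]; simp

lemma pd_add (ha : DifferentiableAt ℝ a x) (hb : DifferentiableAt ℝ b x) (q : Fin m) :
    pd q (fun y => a y + b y) x = pd q a x + pd q b x := by
  unfold pd; rw [fderiv_fun_add ha hb]; simp

lemma pd_sum {F : Fin m → (Fin m → ℝ) → ℝ} (h : ∀ i, DifferentiableAt ℝ (F i) x) (q : Fin m) :
    pd q (fun y => ∑ i, F i y) x = ∑ i, pd q (F i) x := by
  unfold pd; rw [fderiv_fun_sum (fun i _ => h i)]; simp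

lemma pd_sub (ha : DifferentiableAt ℝ a x) (hb : DifferentiableAt ℝ b x) (q : Fin m) :
    pd q (fun y => a y - b y) x = pd q a x - pd q b x := by
  unfold pd; rw [fderiv_fun_sub ha hb]; simp

lemma pd_coord (k q : Fin m) (x : Fin m → ℝ) :
    pd q (fun y : Fin m → ℝ => y k) x = (Pi.single q 1 : Fin m → ℝ) k := by
  unfold pd
  have : fderiv ℝ (fun y : Fin m → ℝ => y k) x
      = (ContinuousLinearMap.proj (R := ℝ) (φ := fun _ : Fin m => ℝ) k) :=
    (ContinuousLinearMap.proj (R := ℝ) (φ := fun _ : Fin m => ℝ) k).fderiv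
  rw [this]
  rfl

lemma pd_euler (hU : IsOpen U) (hf : ContDiffOn ℝ (⊤ : ℕ∞) f U) (hx : x ∈ U) (p : Fin m) :
    pd p (fun y => (∑ k, y k * pd k f y) - f y) x = ∑ k, x k * pd p (pd k f) x := by
  have hg : ∀ k : Fin m, DifferentiableAt ℝ (pd k f) x :=
    fun k => diffAt hU (contDiffOn_pd hU hf k) hx
  have hcoord : ∀ k : Fin m, DifferentiableAt ℝ (fun y : Fin m → ℝ => y k) x :=
    fun k => (ContinuousLinearMap.proj (R := ℝ) (φ := fun _ : Fin m => ℝ) k).differentiableAt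
  have hterm : ∀ k : Fin m, DifferentiableAt ℝ (fun y => y k * pd k f y) x :=
    fun k => (hcoord k).mul (hg k)
  have hsum : DifferentiableAt ℝ (fun y => ∑ k, y k * pd k f y) x := .fun_sum fun k _ => hterm k
  rw [pd_sub hsum (diffAt hU hf hx), pd_sum hterm]
  have e2 : ∀ k : Fin m, pd p (fun y => y k * pd k f y) x
      = (Pi.single p 1 : Fin m → ℝ) k * pd k f x + x k * pd p (pd k f) x := by
    intro k
    rw [pd_mul (hcoord k) (hg k), pd_coord]
    ring
  rw [Finset.sum_congr rfl fun k _ => e2 k, Finset.sum_add_distrib]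
  have e3 : ∑ k, (Pi.single p 1 : Fin m → ℝ) k * pd k f x = pd p f x := by
    simp [Pi.single_apply, ite_mul]
  rw [e3]; ring

end PiDotAux


/-- `π̇₁`, the `t`-derivative at `t = 1` of the rescaled family `π_t(x) = π(tx)/t`,
is a Poisson 2-cocycle for `π` on `U` with zero linearization at the origin. -/
theorem piDot_is_cocycle_with_zero_linearization {m : ℕ} {U : Set (Fin m → ℝ)}
    {π : (Fin m → ℝ) → Matrix (Fin m) (Fin m) ℝ}
    (hU : IsOpen U) (h0 : (0 : Fin m → ℝ) ∈ U)
    (hπ : IsPoissonOn U π) (hπ0 : π 0 = 0) :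
    IsPoisson2CocycleOn U π (piDot π) ∧
    piDot π 0 = 0 ∧
    ∀ (p i j : Fin m), pd p (fun y => piDot π y i j) 0 = 0 := by
  obtain ⟨⟨hsm, hanti⟩, hjac⟩ := hπ
  have hgd : ∀ (a b : Fin m) {x : Fin m → ℝ}, x ∈ U →
      DifferentiableAt ℝ (fun y => π y a b) x :=
    fun a b _ hx => PiDotAux.diffAt hU (hsm a b) hx
  have hpdsm : ∀ (a b l : Fin m), ContDiffOn ℝ (⊤ : ℕ∞) (pd l fun y => π y a b) U :=
    fun a b l => PiDotAux.contDiffOn_pd hU (hsm a b) l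
  have hpdd : ∀ (a b l : Fin m) {x : Fin m → ℝ}, x ∈ U →
      DifferentiableAt ℝ (pd l fun y => π y a b) x :=
    fun a b l _ hx => PiDotAux.diffAt hU (hpdsm a b l) hx
  have hθfun : ∀ a b : Fin m, (fun y => piDot π y a b)
      = fun y => (∑ q, y q * pd q (fun z => π z a b) y) - π y a b := fun _ _ => rfl
  have hθval : ∀ (x : Fin m → ℝ) (a b : Fin m), piDot π x a b
      = (∑ q, x q * pd q (fun z => π z a b) x) - π x a b := fun _ _ _ => rfl
  have hθd : ∀ {x : Fin m → ℝ}, x ∈ U → ∀ a b l : Fin m,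
      pd l (fun y => piDot π y a b) x
        = ∑ q, x q * pd l (pd q fun z => π z a b) x := by
    intro x hx a b l
    rw [hθfun a b]
    exact PiDotAux.pd_euler hU (hsm a b) hx l
  have hθsm : ∀ a b : Fin m, ContDiffOn ℝ (⊤ : ℕ∞) (fun y => piDot π y a b) U := by
    intro a b
    rw [hθfun a b]
    exact (ContDiffOn.sum fun q _ =>
      (((ContinuousLinearMap.proj (R := ℝ) (φ := fun _ : Fin m => ℝ) q).contDiff).contDiffOn).mul
        (hpdsm a b q)).sub (hsm a b)
  refine ⟨⟨⟨fun i j => hθsm i j, ?_⟩, ?_⟩, ?_, ?_⟩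
  · -- antisymmetry of piDot on U
    intro x hx i j
    have hne : (fun y => π y i j) =ᶠ[𝓝 x] (fun y => -π y j i) := by
      filter_upwards [hU.mem_nhds hx] with y hy using hanti y hy i j
    have hpdne : ∀ q : Fin m, pd q (fun y => π y i j) x = - pd q (fun y => π y j i) x := by
      intro q
      rw [PiDotAux.pd_congr hne]
      unfold pd
      rw [fderiv_fun_neg]
      simp
    have hs : ∑ q, x q * pd q (fun z => π z i j) x
        = -∑ q, x q * pd q (fun z => π z j i) x := by
      rw [← Finset.sum_neg_distrib]
      exact Finset.sum_congr rfl fun q _ => by rw [hpdne q]; ring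
    rw [hθval, hθval, hs, hanti x hx i j]
    ring
  · -- the cocycle identity
    intro x hx i j k
    have hsch : ∀ a b l q : Fin m,
        pd l (pd q fun z => π z a b) x = pd q (pd l fun z => π z a b) x :=
      fun a b l q => PiDotAux.pd_comm hU (hsm a b) hx l q
    -- the derivative of the Jacobi identity
    have hJ0 : ∀ q : Fin m, pd q (fun y => ∑ l,
        (π y l i * pd l (fun z => π z j k) y + π y l j * pd l (fun z => π z k i) y +
          π y l k * pd l (fun z => π z i j) y)) x = 0 := by
      intro q
      have hev : (fun y => ∑ l,
          (π y l i * pd l (fun z => π z j k) y + π y l j * pd l (fun z => π z k i) y +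
            π y l k * pd l (fun z => π z i j) y)) =ᶠ[𝓝 x] (fun _ => (0 : ℝ)) := by
        filter_upwards [hU.mem_nhds hx] with y hy using hjac y hy i j k
      rw [PiDotAux.pd_congr hev]
      unfold pd
      simp
    have hJexp : ∀ q : Fin m, pd q (fun y => ∑ l,
        (π y l i * pd l (fun z => π z j k) y + π y l j * pd l (fun z => π z k i) y +
          π y l k * pd l (fun z => π z i j) y)) x
        = ∑ l, (π x l i * pd q (pd l fun z => π z j k) x +
              pd q (fun z => π z l i) x * pd l (fun z => π z j k) x +
              π x l j * pd q (pd l fun z => π z k i) x +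
              pd q (fun z => π z l j) x * pd l (fun z => π z k i) x +
              π x l k * pd q (pd l fun z => π z i j) x +
              pd q (fun z => π z l k) x * pd l (fun z => π z i j) x) := by
      intro q
      rw [PiDotAux.pd_sum (fun l => (((hgd l i hx).fun_mul (hpdd j k l hx)).fun_add
        ((hgd l j hx).fun_mul (hpdd k i l hx))).fun_add ((hgd l k hx).fun_mul (hpdd i j l hx)))]
      refine Finset.sum_congr rfl fun l _ => ?_
      rw [PiDotAux.pd_add (((hgd l i hx).fun_mul (hpdd j k l hx)).fun_add
          ((hgd l j hx).fun_mul (hpdd k i l hx))) ((hgd l k hx).fun_mul (hpdd i j l hx)),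
        PiDotAux.pd_add ((hgd l i hx).fun_mul (hpdd j k l hx)) ((hgd l j hx).fun_mul (hpdd k i l hx)),
        PiDotAux.pd_mul (hgd l i hx) (hpdd j k l hx),
        PiDotAux.pd_mul (hgd l j hx) (hpdd k i l hx),
        PiDotAux.pd_mul (hgd l k hx) (hpdd i j l hx)]
      ring
    have hJ : ∀ q : Fin m, ∑ l,
        (π x l i * pd q (pd l fun z => π z j k) x +
          pd q (fun z => π z l i) x * pd l (fun z => π z j k) x +
          π x l j * pd q (pd l fun z => π z k i) x +
          pd q (fun z => π z l j) x * pd l (fun z => π z k i) x +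
          π x l k * pd q (pd l fun z => π z i j) x +
          pd q (fun z => π z l k) x * pd l (fun z => π z i j) x) = 0 := by
      intro q
      exact (hJexp q).symm.trans (hJ0 q)
    have hjacval : ∑ l, (π x l i * pd l (fun z => π z j k) x +
        π x l j * pd l (fun z => π z k i) x + π x l k * pd l (fun z => π z i j) x) = 0 :=
      hjac x hx i j k
    simp only [hθd hx]
    simp only [hθval]
    have expand : ∀ l : Fin m,
        π x l i * (∑ q, x q * pd l (pd q fun z => π z j k) x) +
          π x l j * (∑ q, x q * pd l (pd q fun z => π z k i) x) +
          π x l k * (∑ q, x q * pd l (pd q fun z => π z i j) x) +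
          ((∑ q, x q * pd q (fun z => π z l i) x) - π x l i) * pd l (fun z => π z j k) x +
          ((∑ q, x q * pd q (fun z => π z l j) x) - π x l j) * pd l (fun z => π z k i) x +
          ((∑ q, x q * pd q (fun z => π z l k) x) - π x l k) * pd l (fun z => π z i j) x
        = (∑ q, x q *
            (π x l i * pd q (pd l fun z => π z j k) x +
              pd q (fun z => π z l i) x * pd l (fun z => π z j k) x +
              π x l j * pd q (pd l fun z => π z k i) x +
              pd q (fun z => π z l j) x * pd l (fun z => π z k i) x +
              π x l k * pd q (pd l fun z => π z i j) x +
              pd q (fun z => π z l k) x * pd l (fun z => π z i j) x)) -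
          (π x l i * pd l (fun z => π z j k) x + π x l j * pd l (fun z => π z k i) x +
            π x l k * pd l (fun z => π z i j) x) := by
      intro l
      have h1 : π x l i * (∑ q, x q * pd l (pd q fun z => π z j k) x)
          = ∑ q, x q * (π x l i * pd q (pd l fun z => π z j k) x) := by
        rw [Finset.mul_sum]
        exact Finset.sum_congr rfl fun q _ => by rw [hsch j k l q]; ring
      have h2 : π x l j * (∑ q, x q * pd l (pd q fun z => π z k i) x)
          = ∑ q, x q * (π x l j * pd q (pd l fun z => π z k i) x) := by
        rw [Finset.mul_sum]
        exact Finset.sum_congr rfl fun q _ => by rw [hsch k i l q]; ring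
      have h3 : π x l k * (∑ q, x q * pd l (pd q fun z => π z i j) x)
          = ∑ q, x q * (π x l k * pd q (pd l fun z => π z i j) x) := by
        rw [Finset.mul_sum]
        exact Finset.sum_congr rfl fun q _ => by rw [hsch i j l q]; ring
      have h4 : (∑ q, x q * pd q (fun z => π z l i) x) * pd l (fun z => π z j k) x
          = ∑ q, x q * (pd q (fun z => π z l i) x * pd l (fun z => π z j k) x) := by
        rw [Finset.sum_mul]
        exact Finset.sum_congr rfl fun q _ => by ring
      have h5 : (∑ q, x q * pd q (fun z => π z l j) x) * pd l (fun z => π z k i) x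
          = ∑ q, x q * (pd q (fun z => π z l j) x * pd l (fun z => π z k i) x) := by
        rw [Finset.sum_mul]
        exact Finset.sum_congr rfl fun q _ => by ring
      have h6 : (∑ q, x q * pd q (fun z => π z l k) x) * pd l (fun z => π z i j) x
          = ∑ q, x q * (pd q (fun z => π z l k) x * pd l (fun z => π z i j) x) := by
        rw [Finset.sum_mul]
        exact Finset.sum_congr rfl fun q _ => by ring
      rw [sub_mul, sub_mul, sub_mul, h1, h2, h3, h4, h5, h6]
      simp only [mul_add, Finset.sum_add_distrib]
      abel
    calc
      ∑ l, (π x l i * (∑ q, x q * pd l (pd q fun z => π z j k) x) +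
          π x l j * (∑ q, x q * pd l (pd q fun z => π z k i) x) +
          π x l k * (∑ q, x q * pd l (pd q fun z => π z i j) x) +
          ((∑ q, x q * pd q (fun z => π z l i) x) - π x l i) * pd l (fun z => π z j k) x +
          ((∑ q, x q * pd q (fun z => π z l j) x) - π x l j) * pd l (fun z => π z k i) x +
          ((∑ q, x q * pd q (fun z => π z l k) x) - π x l k) * pd l (fun z => π z i j) x)
        = ∑ l, ((∑ q, x q *
            (π x l i * pd q (pd l fun z => π z j k) x +
              pd q (fun z => π z l i) x * pd l (fun z => π z j k) x +
              π x l j * pd q (pd l fun z => π z k i) x +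
              pd q (fun z => π z l j) x * pd l (fun z => π z k i) x +
              π x l k * pd q (pd l fun z => π z i j) x +
              pd q (fun z => π z l k) x * pd l (fun z => π z i j) x)) -
          (π x l i * pd l (fun z => π z j k) x + π x l j * pd l (fun z => π z k i) x +
            π x l k * pd l (fun z => π z i j) x)) :=
        Finset.sum_congr rfl fun l _ => expand l
      _ = 0 := by
        rw [Finset.sum_sub_distrib, hjacval, sub_zero, Finset.sum_comm]
        refine Finset.sum_eq_zero fun q _ => ?_
        rw [← Finset.mul_sum, hJ q, mul_zero]
  · -- piDot π 0 = 0
    funext i j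
    rw [show (piDot π 0) i j = piDot π 0 i j from rfl, hθval, hπ0]
    simp
  · -- derivative vanishes at 0
    intro p i j
    rw [hθd h0 i j p]
    simp
end

section
/- Rescaling the homotopy vector field: Let π be a Poisson bivector field on the ball B = B(0,r) ⊆ ℝ^m with π(0) = 0, let P be the smooth extension of (t,x) ↦ π(tx)/t to Ω = {(t,x) ∈ ℝ × ℝ^m : |t|·‖x‖ < r} with P(0,x) = π_lin(x), and let X : B → ℝ^m be a smooth vector field with L_X π = −π̇₁ on B, X(0) = 0 and DX(0) = 0. Then the map (t,x) ↦ X(tx)/t², defined for (t,x) ∈ Ω with t ≠ 0, extends to a smooth map X̃ on Ω with X̃(t,0) = 0 for all t, and for every (t,x) ∈ Ω with t ∈ (0,1] one has L_{X̃(t,·)} P(t,·) = −∂_t P(t,·) at (t,x). -/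
open scoped Topology

open scoped NNReal ENNReal

lemma pd_congr {m : ℕ} {f g : (Fin m → ℝ) → ℝ} {x : Fin m → ℝ}
    (h : f =ᶠ[𝓝 x] g) (l : Fin m) : pd l f x = pd l g x := by
  unfold pd; rw [Filter.EventuallyEq.fderiv_eq h]

lemma clm_apply_eq_sum {m : ℕ} (φ : (Fin m → ℝ) →L[ℝ] ℝ) (x : Fin m → ℝ) :
    φ x = ∑ k, x k * φ (Pi.single k 1) := by
  have hx : x = ∑ k, x k • (Pi.single k 1 : Fin m → ℝ) := by
    have := Finset.univ_sum_single x
    rw [← this]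
    congr 1
    funext k
    ext n
    simp [Pi.single_apply]
  conv_lhs => rw [hx]
  rw [map_sum]
  refine Finset.sum_congr rfl fun k _ => ?_
  rw [map_smul]; simp [smul_eq_mul]

lemma hasFDerivAt_smul_self {m : ℕ} (t : ℝ) (x : Fin m → ℝ) :
    HasFDerivAt (fun z : Fin m → ℝ => t • z) (t • ContinuousLinearMap.id ℝ (Fin m → ℝ)) x := by
  simpa using (t • ContinuousLinearMap.id ℝ (Fin m → ℝ)).hasFDerivAt (x := x)

lemma hasFDerivAt_comp_smul {m : ℕ} {f : (Fin m → ℝ) → ℝ} {t : ℝ} {x : Fin m → ℝ}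
    (hf : DifferentiableAt ℝ f (t • x)) :
    HasFDerivAt (fun z => f (t • z))
      ((fderiv ℝ f (t • x)).comp (t • ContinuousLinearMap.id ℝ (Fin m → ℝ))) x :=
  hf.hasFDerivAt.comp x (hasFDerivAt_smul_self t x)

lemma pd_comp_smul {m : ℕ} {f : (Fin m → ℝ) → ℝ} {t : ℝ} {x : Fin m → ℝ}
    (hf : DifferentiableAt ℝ f (t • x)) (l : Fin m) :
    pd l (fun z => f (t • z)) x = t * pd l f (t • x) := by
  unfold pd
  rw [(hasFDerivAt_comp_smul hf).fderiv]
  simp [ContinuousLinearMap.comp_apply, map_smul, smul_eq_mul]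

lemma contDiff_param_integral_nat {H : Type} [NormedAddCommGroup H] [NormedSpace ℝ H]
    [ProperSpace H] (n : ℕ) : ∀ (V : Type) [NormedAddCommGroup V] [NormedSpace ℝ V]
    [CompleteSpace V] (G : H × ℝ → V), ContDiff ℝ n G →
    ContDiff ℝ n (fun h => ∫ s in (0:ℝ)..1, G (h, s)) := by
  induction n with
  | zero =>
    intro V _ _ _ G hG
    simp only [Nat.cast_zero, contDiff_zero] at hG ⊢
    exact intervalIntegral.continuous_parametric_intervalIntegral_of_continuous'
      (f := fun h s => G (h, s)) hG 0 1
  | succ n ih =>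
    intro V _ _ _ G hG
    rw [Nat.cast_succ] at hG ⊢
    set G' : H × ℝ → H →L[ℝ] V :=
      fun p => (fderiv ℝ G p).comp (ContinuousLinearMap.inl ℝ H ℝ) with hG'
    have hG'sm : ContDiff ℝ n G' := (hG.fderiv_right le_rfl).clm_comp contDiff_const
    have hG'c : Continuous G' := hG'sm.continuous
    have hGd : Differentiable ℝ G := hG.differentiable (by simp)
    rw [contDiff_succ_iff_hasFDerivAt]
    refine ⟨fun h => ∫ s in (0:ℝ)..1, G' (h, s), ih _ G' hG'sm, fun h0 => ?_⟩
    obtain ⟨C, hC⟩ := ((isCompact_closedBall h0 1).prod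
      (isCompact_Icc (a := (0:ℝ)) (b := 1))).exists_bound_of_continuousOn hG'c.continuousOn
    refine intervalIntegral.hasFDerivAt_integral_of_dominated_of_fderiv_le
      (𝕜 := ℝ) (H := H) (E := V) (F := fun h s => G (h, s)) (F' := fun h s => G' (h, s))
      (bound := fun _ => C) (Metric.ball_mem_nhds h0 one_pos) ?_ ?_ ?_ ?_ ?_ ?_
    · exact Filter.Eventually.of_forall fun h =>
        (hGd.continuous.comp (Continuous.prodMk continuous_const continuous_id)).aestronglyMeasurable
    · exact (hGd.continuous.comp
        (Continuous.prodMk continuous_const continuous_id)).intervalIntegrable _ _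
    · exact (hG'c.comp (Continuous.prodMk continuous_const continuous_id)).aestronglyMeasurable
    · refine Filter.Eventually.of_forall fun t ht h hh =>
        hC (h, t) ⟨Metric.ball_subset_closedBall hh, ?_⟩
      rw [Set.uIoc_of_le zero_le_one] at ht
      exact ⟨ht.1.le, ht.2⟩
    · exact intervalIntegrable_const
    · refine Filter.Eventually.of_forall fun t _ h _ => ?_
      exact (hGd (h, t)).hasFDerivAt.comp h (hasFDerivAt_prodMk_left h t)

lemma contDiff_param_integral {H V : Type} [NormedAddCommGroup H] [NormedSpace ℝ H]
    [ProperSpace H] [NormedAddCommGroup V] [NormedSpace ℝ V] [CompleteSpace V]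
    (G : H × ℝ → V) (hG : ContDiff ℝ (⊤ : ℕ∞) G) :
    ContDiff ℝ (⊤ : ℕ∞) (fun h => ∫ s in (0:ℝ)..1, G (h, s)) :=
  contDiff_infty.mpr fun n => contDiff_param_integral_nat n V G (contDiff_infty.mp hG n)

lemma div_by_t {m : ℕ} (F : ℝ × (Fin m → ℝ) → (Fin m → ℝ)) (hF : ContDiff ℝ (⊤ : ℕ∞) F)
    (hF0 : ∀ x, F (0, x) = 0) :
    ∃ B : ℝ × (Fin m → ℝ) → (Fin m → ℝ), ContDiff ℝ (⊤ : ℕ∞) B ∧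
      (∀ t x, F (t, x) = t • B (t, x)) ∧ (∀ x, B (0, x) = fderiv ℝ F (0, x) (1, 0)) := by
  have h1 : ContDiff ℝ (⊤ : ℕ∞) (fderiv ℝ F) := (contDiff_infty_iff_fderiv.mp hF).2
  refine ⟨fun p => ∫ s in (0:ℝ)..1, fderiv ℝ F (s * p.1, p.2) (1, 0), ?_, ?_, ?_⟩
  · apply contDiff_param_integral
      (fun q : (ℝ × (Fin m → ℝ)) × ℝ => fderiv ℝ F (q.2 * q.1.1, q.1.2) (1, 0))
    have h2 : ContDiff ℝ (⊤ : ℕ∞) (fun q : (ℝ × (Fin m → ℝ)) × ℝ =>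
        ((q.2 * q.1.1, q.1.2) : ℝ × (Fin m → ℝ))) := by fun_prop
    exact (h1.comp h2).clm_apply contDiff_const
  · intro t x
    show F (t, x) = t • ∫ s in (0:ℝ)..1, fderiv ℝ F (s * t, x) (1, 0)
    rw [← intervalIntegral.integral_smul]
    have hd : ∀ s ∈ Set.uIcc (0:ℝ) 1, HasDerivAt (fun s : ℝ => F (s * t, x))
        (t • fderiv ℝ F (s * t, x) (1, 0)) s := by
      intro s _
      have hg : HasDerivAt (fun s : ℝ => ((s * t, x) : ℝ × (Fin m → ℝ)))
          ((t, 0) : ℝ × (Fin m → ℝ)) s := by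
        have := ((hasDerivAt_id s).mul_const t).prodMk (hasDerivAt_const s x)
        simpa using this
      have h3 := (hF.differentiable (by simp) (s * t, x)).hasFDerivAt.comp_hasDerivAt s hg
      have h4 : ((t, 0) : ℝ × (Fin m → ℝ)) = t • ((1, 0) : ℝ × (Fin m → ℝ)) := by simp
      rw [h4, map_smul] at h3
      exact h3
    rw [intervalIntegral.integral_eq_sub_of_hasDerivAt hd]
    · simp [hF0]
    · apply Continuous.intervalIntegrable
      exact (continuous_const : Continuous fun _ : ℝ => t).smul ((Continuous.comp (hF.continuous_fderiv (by simp))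
        (f := fun s : ℝ => ((s * t, x) : ℝ × (Fin m → ℝ))) (by fun_prop)).clm_apply
        continuous_const)
  · intro x
    simp

set_option maxHeartbeats 1000000 in
/-- **Rescaling the homotopy vector field**: if `X` solves `L_X π = -π̇₁` on the ball
`B(0,r)` with zero linearization at the origin, then `(t,x) ↦ X(tx)/t²` extends to a
smooth time-dependent vector field `X̃` on `Ω = {(t,x) : |t|‖x‖ < r}` vanishing at the
origin, which solves the homotopy equation `L_{X̃_t} P_t = -∂_t P_t` for `t ∈ (0,1]`,
where `P` is the smooth extension of the rescaled family `(t,x) ↦ π(tx)/t`. -/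
theorem rescaled_homotopy_vector_field {m : ℕ} {r : ℝ} (hr : 0 < r)
    {π : (Fin m → ℝ) → Matrix (Fin m) (Fin m) ℝ}
    (hπ : IsPoissonOn (Metric.ball (0 : Fin m → ℝ) r) π) (hπ0 : π 0 = 0)
    (P : ℝ → (Fin m → ℝ) → Matrix (Fin m) (Fin m) ℝ)
    (hPsmooth : ∀ i j, ContDiffOn ℝ (⊤ : ℕ∞) (fun p : ℝ × (Fin m → ℝ) => P p.1 p.2 i j)
      {p : ℝ × (Fin m → ℝ) | |p.1| * ‖p.2‖ < r})
    (hPt : ∀ t : ℝ, t ≠ 0 → ∀ x : Fin m → ℝ, |t| * ‖x‖ < r → ∀ i j,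
      P t x i j = π (t • x) i j / t)
    (hP0 : ∀ x : Fin m → ℝ, P 0 x = linPart π x)
    (X : (Fin m → ℝ) → (Fin m → ℝ))
    (hXsmooth : ContDiffOn ℝ (⊤ : ℕ∞) X (Metric.ball (0 : Fin m → ℝ) r))
    (hX : ∀ x ∈ Metric.ball (0 : Fin m → ℝ) r, ∀ i j, lieDeriv X π x i j = - piDot π x i j)
    (hX0 : X 0 = 0) (hDX0 : fderiv ℝ X 0 = 0) :
    ∃ Xt : ℝ → (Fin m → ℝ) → (Fin m → ℝ),
      ContDiffOn ℝ (⊤ : ℕ∞) (fun p : ℝ × (Fin m → ℝ) => Xt p.1 p.2)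
        {p : ℝ × (Fin m → ℝ) | |p.1| * ‖p.2‖ < r} ∧
      (∀ t : ℝ, t ≠ 0 → ∀ x : Fin m → ℝ, |t| * ‖x‖ < r → Xt t x = (t ^ 2)⁻¹ • X (t • x)) ∧
      (∀ t : ℝ, Xt t 0 = 0) ∧
      (∀ t : ℝ, 0 < t → t ≤ 1 → ∀ x : Fin m → ℝ, |t| * ‖x‖ < r → ∀ i j,
        lieDeriv (Xt t) (P t) x i j = - deriv (fun s => P s x i j) t) := by
  classical
  have hball : IsOpen (Metric.ball (0 : Fin m → ℝ) r) := Metric.isOpen_ball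
  have h0mem : (0 : Fin m → ℝ) ∈ Metric.ball (0 : Fin m → ℝ) r := Metric.mem_ball_self hr
  have hr2 : (0:ℝ) < r/2 := by positivity
  let φb : ContDiffBump (0 : Fin m → ℝ) := ⟨r/2, 3*r/4, hr2, by linarith⟩
  set X' : (Fin m → ℝ) → (Fin m → ℝ) := fun y => (φb y) • X y with hX'
  have hX'eq : ∀ y : Fin m → ℝ, ‖y‖ < r/2 → X' y = X y := by
    intro y hy
    have : φb y = 1 := φb.one_of_mem_closedBall
      (by rw [Metric.mem_closedBall, dist_zero_right]; exact hy.le)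
    show φb y • X y = X y
    rw [this, one_smul]
  have hX'smooth : ContDiff ℝ (⊤ : ℕ∞) X' := by
    rw [contDiff_iff_contDiffAt]
    intro y
    by_cases hy : ‖y‖ < r
    · have hyb : y ∈ Metric.ball (0 : Fin m → ℝ) r := by
        rw [Metric.mem_ball, dist_zero_right]; exact hy
      exact (φb.contDiff.contDiffAt).smul (hXsmooth.contDiffAt (hball.mem_nhds hyb))
    · have hnot : y ∉ tsupport φb := by
        rw [φb.tsupport_eq]
        intro hy'
        rw [Metric.mem_closedBall, dist_zero_right] at hy'
        have h34 : φb.rOut = 3*r/4 := rfl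
        rw [h34] at hy'
        linarith [not_lt.mp hy]
      have hev : (fun z => (φb z) • X z) =ᶠ[𝓝 y] fun _ => (0 : Fin m → ℝ) := by
        filter_upwards [notMem_tsupport_iff_eventuallyEq.mp hnot] with z hz
        simp [hz]
      exact (contDiffAt_const).congr_of_eventuallyEq hev
  have hX'0 : X' 0 = 0 := by rw [hX'eq 0 (by simpa using hr2)]; exact hX0
  have hDX'0 : fderiv ℝ X' 0 = 0 := by
    have hev : X' =ᶠ[𝓝 0] X := by
      filter_upwards [Metric.ball_mem_nhds (0 : Fin m → ℝ) hr2] with y hy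
      exact hX'eq y (by simpa using hy)
    rw [hev.fderiv_eq, hDX0]
  have hF1 : ContDiff ℝ (⊤ : ℕ∞) (fun p : ℝ × (Fin m → ℝ) => X' (p.1 • p.2)) :=
    hX'smooth.comp (contDiff_fst.smul contDiff_snd)
  obtain ⟨A, hAsm, hA, hA0'⟩ :=
    div_by_t (fun p : ℝ × (Fin m → ℝ) => X' (p.1 • p.2)) hF1 (fun x => by simp [hX'0])
  have hfd : ∀ x : Fin m → ℝ,
      fderiv ℝ (fun p : ℝ × (Fin m → ℝ) => X' (p.1 • p.2)) (0, x) = 0 := by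
    intro x
    have hcomp : (fun p : ℝ × (Fin m → ℝ) => X' (p.1 • p.2))
        = X' ∘ (fun p : ℝ × (Fin m → ℝ) => p.1 • p.2) := rfl
    have hd2 : DifferentiableAt ℝ (fun p : ℝ × (Fin m → ℝ) => p.1 • p.2) (0, x) := by fun_prop
    rw [hcomp, fderiv_comp (g := X') (f := fun p : ℝ × (Fin m → ℝ) => p.1 • p.2) _
      (hX'smooth.differentiable (by simp) _) hd2]
    simp [hDX'0]
  have hA0 : ∀ x, A (0, x) = 0 := fun x => by simp [hA0' x, hfd x]
  obtain ⟨B, hBsm, hB, -⟩ := div_by_t A hAsm hA0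
  have hXB : ∀ (t : ℝ) (x : Fin m → ℝ), X' (t • x) = (t^2) • B (t, x) := by
    intro t x
    rw [show X' (t • x) = t • A (t, x) from hA t x, hB t x, smul_smul, sq]
  -- the global extension
  set Fd : ℝ × (Fin m → ℝ) → (Fin m → ℝ) :=
    fun w => if w.1 = 0 then B (0, w.2) else (w.1^2)⁻¹ • X (w.1 • w.2) with hFd
  have hFdsm : ∀ w : ℝ × (Fin m → ℝ), |w.1| * ‖w.2‖ < r → ContDiffAt ℝ (⊤ : ℕ∞) Fd w := by
    intro w hw
    by_cases hw1 : w.1 = 0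
    · have hopen : IsOpen {u : ℝ × (Fin m → ℝ) | |u.1| * ‖u.2‖ < r/2} :=
        isOpen_lt ((continuous_abs.comp continuous_fst).mul (continuous_norm.comp continuous_snd))
          continuous_const
      have hwmem : w ∈ {u : ℝ × (Fin m → ℝ) | |u.1| * ‖u.2‖ < r/2} := by
        show |w.1| * ‖w.2‖ < r/2
        rw [hw1]; simpa using hr2
      have hev : B =ᶠ[𝓝 w] Fd := by
        filter_upwards [hopen.mem_nhds hwmem] with u hu
        obtain ⟨a, b⟩ := u
        have hu' : |a| * ‖b‖ < r/2 := hu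
        by_cases hu1 : a = 0
        · have h : Fd (a, b) = B (0, b) := if_pos hu1
          rw [h, hu1]
        · have h : Fd (a, b) = (a^2)⁻¹ • X (a • b) := if_neg hu1
          have hn : ‖a • b‖ < r/2 := by rw [norm_smul, Real.norm_eq_abs]; exact hu'
          rw [h, ← hX'eq _ hn, hXB, smul_smul, inv_mul_cancel₀ (pow_ne_zero 2 hu1), one_smul]
      exact hBsm.contDiffAt.congr_of_eventuallyEq hev.symm
    · -- away from the slice
      have hmem : w.1 • w.2 ∈ Metric.ball (0 : Fin m → ℝ) r := by
        rw [Metric.mem_ball, dist_zero_right, norm_smul, Real.norm_eq_abs]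
        exact hw
      have hXa : ContDiffAt ℝ (⊤ : ℕ∞) X (w.1 • w.2) :=
        hXsmooth.contDiffAt (hball.mem_nhds hmem)
      have hGan : ContDiffAt ℝ (⊤ : ℕ∞)
          (fun u : ℝ × (Fin m → ℝ) => (u.1^2)⁻¹ • X (u.1 • u.2)) w := by
        have hinv : ContDiffAt ℝ (⊤ : ℕ∞) (fun u : ℝ × (Fin m → ℝ) => (u.1^2)⁻¹) w :=
          (contDiffAt_fst.pow 2).inv (pow_ne_zero 2 hw1)
        have hsm : ContDiffAt ℝ (⊤ : ℕ∞) (fun u : ℝ × (Fin m → ℝ) => u.1 • u.2) w :=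
          contDiffAt_fst.smul contDiffAt_snd
        exact hinv.smul (hXa.comp w hsm)
      have hev : (fun u : ℝ × (Fin m → ℝ) => (u.1^2)⁻¹ • X (u.1 • u.2)) =ᶠ[𝓝 w] Fd := by
        have hopen : IsOpen {u : ℝ × (Fin m → ℝ) | u.1 ≠ 0} :=
          isOpen_compl_singleton.preimage continuous_fst
        filter_upwards [hopen.mem_nhds hw1] with u hu
        rw [hFd]
        simp only [if_neg hu]
      exact hGan.congr_of_eventuallyEq hev.symm
  -- the existence statement
  refine ⟨fun t x => Fd (t, x), ?_, ?_, ?_, ?_⟩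
  · -- smoothness on Ω
    intro w hw
    exact (hFdsm w hw).contDiffWithinAt
  · -- identification for t ≠ 0
    intro t ht x hx
    exact if_neg ht
  · -- vanishing at the origin
    intro t
    show Fd (t, 0) = 0
    by_cases ht : t = 0
    · have h1 : Fd (t, 0) = B (0, 0) := if_pos ht
      rw [h1]
      have hc : Continuous fun s : ℝ => B (s, 0) :=
        hBsm.continuous.comp (continuous_id.prodMk continuous_const)
      have heq : (fun s : ℝ => B (s, 0)) = fun _ => 0 := by
        refine hc.ext_on (dense_compl_singleton (0:ℝ)) continuous_const ?_
        intro s hs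
        have hs0 : s ≠ 0 := hs
        have h := hXB s 0
        rw [smul_zero, hX'0] at h
        exact (smul_eq_zero.mp h.symm).resolve_left (pow_ne_zero 2 hs0)
      exact congrFun heq 0
    · have h1 : Fd (t, 0) = (t^2)⁻¹ • X (t • (0 : Fin m → ℝ)) := if_neg ht
      rw [h1, smul_zero, hX0, smul_zero]
  · -- the homotopy equation
    intro t ht0 ht1 x hxr i j
    have ht : t ≠ 0 := ne_of_gt ht0
    have hyr : t • x ∈ Metric.ball (0 : Fin m → ℝ) r := by
      rw [Metric.mem_ball, dist_zero_right, norm_smul, Real.norm_eq_abs]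
      exact hxr
    have hπd : ∀ a b, DifferentiableAt ℝ (fun z => π z a b) (t • x) :=
      fun a b => ((hπ.1.1 a b).contDiffAt (hball.mem_nhds hyr)).differentiableAt (by simp)
    have hXd : DifferentiableAt ℝ X (t • x) :=
      (hXsmooth.contDiffAt (hball.mem_nhds hyr)).differentiableAt (by simp)
    have hXdc : ∀ a, DifferentiableAt ℝ (fun z => X z a) (t • x) :=
      fun a => differentiableAt_pi.mp hXd a
    have hUopen : IsOpen {z : Fin m → ℝ | |t| * ‖z‖ < r} :=
      isOpen_lt (continuous_const.mul continuous_norm) continuous_const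
    have hUnhds : {z : Fin m → ℝ | |t| * ‖z‖ < r} ∈ 𝓝 x := hUopen.mem_nhds hxr
    have hXtv : ∀ z : Fin m → ℝ, Fd (t, z) = (t^2)⁻¹ • X (t • z) := fun z => if_neg ht
    -- partial derivatives of the rescaled bivector
    have hpdP : ∀ l, pd l (fun z => P t z i j) x = pd l (fun z => π z i j) (t • x) := by
      intro l
      have hev : (fun z => P t z i j) =ᶠ[𝓝 x] fun z => π (t • z) i j * t⁻¹ := by
        filter_upwards [hUnhds] with z hz
        rw [hPt t ht z hz i j, div_eq_mul_inv]
      rw [pd_congr hev l]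
      have hdc : DifferentiableAt ℝ (fun z => π (t • z) i j) x :=
        (hasFDerivAt_comp_smul (hπd i j)).differentiableAt
      unfold pd
      rw [fderiv_mul_const hdc, ContinuousLinearMap.smul_apply, smul_eq_mul]
      have h2 := pd_comp_smul (hπd i j) l
      unfold pd at h2
      rw [h2]
      field_simp
    -- partial derivatives of the rescaled vector field
    have hpdXt : ∀ (a : Fin m) l, pd l (fun z => Fd (t, z) a) x
        = (t^2)⁻¹ * (t * pd l (fun z => X z a) (t • x)) := by
      intro a l
      have hev : (fun z => Fd (t, z) a) =ᶠ[𝓝 x] fun z => (t^2)⁻¹ * X (t • z) a := by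
        filter_upwards with z
        rw [hXtv z, Pi.smul_apply, smul_eq_mul]
      rw [pd_congr hev l]
      have hdc : DifferentiableAt ℝ (fun z => X (t • z) a) x :=
        (hasFDerivAt_comp_smul (hXdc a)).differentiableAt
      unfold pd
      rw [fderiv_const_mul hdc, ContinuousLinearMap.smul_apply, smul_eq_mul]
      have h2 := pd_comp_smul (hXdc a) l
      unfold pd at h2
      rw [h2]
    -- time derivative of the rescaled bivector
    have hin : HasDerivAt (fun s : ℝ => s • x) x t := by
      simpa using (hasDerivAt_id t).smul_const x
    have hD : HasDerivAt (fun s : ℝ => π (s • x) i j)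
        ((fderiv ℝ (fun z => π z i j) (t • x)) x) t :=
      HasFDerivAt.comp_hasDerivAt (f := fun s : ℝ => s • x) t (hπd i j).hasFDerivAt hin
    have hder : deriv (fun s => P s x i j) t
        = (fderiv ℝ (fun z => π z i j) (t • x)) x * t⁻¹ + π (t • x) i j * (-(t^2)⁻¹) := by
      have hopen : IsOpen {s : ℝ | s ≠ 0 ∧ |s| * ‖x‖ < r} := by
        refine IsOpen.inter isOpen_ne
          (isOpen_lt (continuous_abs.mul continuous_const) continuous_const)
      have hev : (fun s => P s x i j) =ᶠ[𝓝 t] fun s => π (s • x) i j * s⁻¹ := by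
        filter_upwards [hopen.mem_nhds ⟨ht, hxr⟩] with s hs
        rw [hPt s hs.1 x hs.2 i j, div_eq_mul_inv]
      rw [hev.deriv_eq]
      exact (hD.mul (hasDerivAt_inv ht)).deriv
    have hDx : (fderiv ℝ (fun z => π z i j) (t • x)) x
        = ∑ k, x k * pd k (fun z => π z i j) (t • x) :=
      clm_apply_eq_sum _ x
    -- the Lie derivative identity for π and X, evaluated at t • x
    have hXeq := hX (t • x) hyr i j
    unfold lieDeriv piDot at hXeq
    simp only [Matrix.of_apply] at hXeq
    unfold lieDeriv
    simp only [Matrix.of_apply]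
    have hsumL : (∑ l, (Fd (t, x) l * pd l (fun z => P t z i j) x
          - P t x l j * pd l (fun z => Fd (t, z) i) x
          - P t x i l * pd l (fun z => Fd (t, z) j) x))
        = (t^2)⁻¹ * ∑ l, (X (t • x) l * pd l (fun z => π z i j) (t • x)
          - π (t • x) l j * pd l (fun z => X z i) (t • x)
          - π (t • x) i l * pd l (fun z => X z j) (t • x)) := by
      rw [Finset.mul_sum]
      refine Finset.sum_congr rfl fun l _ => ?_
      rw [hpdP l, hpdXt i l, hpdXt j l, hPt t ht x hxr l j, hPt t ht x hxr i l]
      have hFdx : Fd (t, x) l = (t^2)⁻¹ * X (t • x) l := by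
        rw [hXtv x, Pi.smul_apply, smul_eq_mul]
      rw [hFdx]
      field_simp
    rw [hsumL, hXeq, hder, hDx]
    have hsum2 : (∑ k, (t • x) k * pd k (fun z => π z i j) (t • x))
        = t * ∑ k, x k * pd k (fun z => π z i j) (t • x) := by
      rw [Finset.mul_sum]
      refine Finset.sum_congr rfl fun k _ => ?_
      rw [Pi.smul_apply, smul_eq_mul]
      ring
    rw [hsum2]
    set S := ∑ k, x k * pd k (fun z => π z i j) (t • x)
    field_simp
    ring
end

section
/- The rescaled path of Poisson structures extends smoothly to its linear part: Let π be a Poisson bivector field on the ball B = B(0,r) ⊆ ℝ^m with π(0) = 0, and let Ω = {(t,x) ∈ ℝ × ℝ^m : |t|·‖x‖ < r}. Then there is a smooth map P : Ω → Matrix (Fin m) (Fin m) ℝ such that P(t,x) = π(tx)/t whenever t ≠ 0, and P(0,x) = π_lin(x) for all x ∈ ℝ^m; moreover, for every fixed t, the slice P(t,·) is a Poisson bivector field on the open set {x : |t|·‖x‖ < r} (in particular each member π_t of the path, including the linear part π_0 = π_lin, is a Poisson structure, with π_1 = π). -/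
open scoped Topology ContDiff ENNReal NNReal
set_option maxHeartbeats 1000000

lemma clm_eval_sum {m : ℕ} (A : (Fin m → ℝ) →L[ℝ] ℝ) (x : Fin m → ℝ) :
    ∑ k, A (Pi.single k 1) * x k = A x := by
  have hx : x = ∑ k, x k • (Pi.single k 1 : Fin m → ℝ) := by
    funext j
    simp [Finset.sum_apply, Pi.single_apply]
  conv_rhs => rw [hx]
  rw [map_sum]
  refine Finset.sum_congr rfl fun k _ => ?_
  rw [map_smul]
  simp [mul_comm]

lemma param_smooth {H : Type} [NormedAddCommGroup H] [NormedSpace ℝ H] [ProperSpace H] :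
    ∀ (n : ℕ) {F : Type} [NormedAddCommGroup F] [NormedSpace ℝ F] (G : H × ℝ → F),
      ContDiff ℝ ∞ G → ContDiff ℝ n (fun q => ∫ s in (0:ℝ)..1, G (q, s))
  | 0, F, _, _, G, hG => by
    rw [Nat.cast_zero, contDiff_zero]
    exact intervalIntegral.continuous_parametric_intervalIntegral_of_continuous'
      (f := fun q s => G (q, s)) hG.continuous 0 1
  | n + 1, F, _, _, G, hG => by
    rw [Nat.cast_succ, contDiff_succ_iff_hasFDerivAt]
    set D : H × ℝ → H →L[ℝ] F := fun p => (fderiv ℝ G p).comp (ContinuousLinearMap.inl ℝ H ℝ)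
      with hDdef
    have hD : ContDiff ℝ ∞ D :=
      ((contDiff_infty_iff_fderiv.mp hG).2).clm_comp contDiff_const
    refine ⟨fun q => ∫ s in (0:ℝ)..1, D (q, s), param_smooth n D hD, fun q0 => ?_⟩
    have hK : IsCompact (Metric.closedBall q0 1 ×ˢ Set.Icc (0:ℝ) 1) :=
      (isCompact_closedBall q0 1).prod isCompact_Icc
    obtain ⟨C, hC⟩ := hK.exists_bound_of_continuousOn hD.continuous.continuousOn
    have hcG : ∀ q, Continuous fun s => G (q, s) := fun q =>
      hG.continuous.comp (continuous_const.prodMk continuous_id)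
    have hcD : ∀ q, Continuous fun s => D (q, s) := fun q =>
      hD.continuous.comp (continuous_const.prodMk continuous_id)
    refine hasFDerivAt_integral_of_dominated_of_fderiv_le'' (μ := MeasureTheory.volume)
      (F := fun q s => G (q, s)) (F' := fun q s => D (q, s)) (bound := fun _ => C)
      (Metric.ball_mem_nhds q0 one_pos)
      (Filter.Eventually.of_forall fun q => (hcG q).aestronglyMeasurable)
      ((hcG q0).intervalIntegrable 0 1) (hcD q0).aestronglyMeasurable ?_
      (continuous_const.intervalIntegrable 0 1) ?_
    · refine MeasureTheory.ae_restrict_of_forall_mem measurableSet_uIoc fun t ht x hx => ?_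
      rw [Set.uIoc_of_le zero_le_one] at ht
      exact hC (x, t) ⟨Metric.ball_subset_closedBall hx, Set.Ioc_subset_Icc_self ht⟩
    · exact Filter.Eventually.of_forall fun t x _ =>
        ((hG.differentiable (by simp)) (x, t)).hasFDerivAt.comp x (hasFDerivAt_prodMk_left x t)

lemma hadamard {m : ℕ} {r : ℝ} (hr : 0 < r) {f : (Fin m → ℝ) → ℝ}
    (hf : ContDiffOn ℝ (⊤ : ℕ∞) f (Metric.ball 0 r)) (hf0 : f 0 = 0) :
    ∃ ρ : ℝ, 0 < ρ ∧ ∃ F : ℝ × (Fin m → ℝ) → ℝ,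
      (∀ q : ℝ × (Fin m → ℝ), ‖q.1 • q.2‖ < ρ → ContDiffAt ℝ ∞ F q) ∧
      (∀ (t : ℝ) (x : Fin m → ℝ), ‖t • x‖ < ρ → f (t • x) = t * F (t, x)) ∧
      (∀ x, F (0, x) = fderiv ℝ f 0 x) := by
  let χ : ContDiffBump (0 : Fin m → ℝ) := ⟨r / 2, 3 * r / 4, by positivity, by linarith⟩
  set g : (Fin m → ℝ) → ℝ := fun y => χ y * f y with hgdef
  have hg : ContDiff ℝ ∞ g := contDiff_iff_contDiffAt.mpr fun y => by
    by_cases hy : y ∈ Metric.ball (0 : Fin m → ℝ) r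
    · exact χ.contDiff.contDiffAt.mul (hf.contDiffAt (Metric.isOpen_ball.mem_nhds hy))
    · have ho : IsOpen {z : Fin m → ℝ | 3 * r / 4 < ‖z‖} := isOpen_lt continuous_const continuous_norm
      have hy' : y ∈ {z : Fin m → ℝ | 3 * r / 4 < ‖z‖} := by
        simp only [Metric.mem_ball, dist_zero_right, not_lt] at hy
        show 3 * r / 4 < ‖y‖
        linarith
      have hev : g =ᶠ[𝓝 y] fun _ => (0:ℝ) := by
        filter_upwards [ho.mem_nhds hy'] with z hz
        simp only [hgdef]
        rw [χ.zero_of_le_dist (by rw [dist_zero_right]; exact le_of_lt hz), zero_mul]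
      exact contDiffAt_const.congr_of_eventuallyEq hev
  have hgf : ∀ y : Fin m → ℝ, ‖y‖ < r / 2 → g y = f y := by
    intro y hy
    simp only [hgdef]
    rw [χ.one_of_mem_closedBall (by rw [Metric.mem_closedBall, dist_zero_right]; exact le_of_lt hy),
      one_mul]
  have hg0 : g 0 = 0 := by simp [hgdef, hf0]
  have hfd : ContDiff ℝ ∞ (fderiv ℝ g) := (contDiff_infty_iff_fderiv.mp hg).2
  have hgd : Differentiable ℝ g := hg.differentiable (by simp)
  set D : (ℝ × (Fin m → ℝ)) × ℝ → ℝ := fun p => fderiv ℝ g (p.2 • p.1.1 • p.1.2) p.1.2 with hDdef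
  have hD : ContDiff ℝ ∞ D :=
    (hfd.comp (contDiff_snd.smul (contDiff_fst.fst.smul contDiff_fst.snd))).clm_apply
      contDiff_fst.snd
  have hF : ContDiff ℝ ∞ (fun q => ∫ s in (0:ℝ)..1, D (q, s)) :=
    contDiff_infty.mpr fun n => param_smooth n D hD
  refine ⟨r / 2, by positivity, fun q => ∫ s in (0:ℝ)..1, D (q, s), fun q _ => hF.contDiffAt,
    ?_, ?_⟩
  · intro t x hlt
    have hder : ∀ s ∈ Set.uIcc (0:ℝ) 1, HasDerivAt (fun s : ℝ => g (s • (t • x)))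
        (t * D ((t, x), s)) s := by
      intro s _
      have h1 : HasDerivAt (fun s : ℝ => s • (t • x)) ((1:ℝ) • (t • x)) s :=
        (hasDerivAt_id s).smul_const (t • x)
      have h2 := (hgd (s • (t • x))).hasFDerivAt.comp_hasDerivAt s h1
      refine h2.congr_deriv ?_
      simp only [hDdef, one_smul, map_smul, smul_eq_mul]
    have hcont : Continuous fun s : ℝ => D ((t, x), s) :=
      hD.continuous.comp (continuous_const.prodMk continuous_id)
    have hint := intervalIntegral.integral_eq_sub_of_hasDerivAt hder
      ((continuous_const.mul hcont).intervalIntegrable 0 1)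
    rw [intervalIntegral.integral_const_mul] at hint
    rw [← hgf _ hlt, hint]
    simp [hg0]
  · intro x
    have hev : g =ᶠ[𝓝 (0 : Fin m → ℝ)] f :=
      Filter.eventuallyEq_of_mem (Metric.ball_mem_nhds (0 : Fin m → ℝ) (half_pos hr)) fun y hy =>
        hgf y (by simpa using hy)
    simp [hDdef, hev.fderiv_eq]

section MainProof

variable {m : ℕ}

lemma linPart_eq_fderiv (π : (Fin m → ℝ) → Matrix (Fin m) (Fin m) ℝ) (x : Fin m → ℝ)
    (i j : Fin m) : linPart π x i j = fderiv ℝ (fun y => π y i j) 0 x := by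
  have := clm_eval_sum (fderiv ℝ (fun y => π y i j) 0) x
  simpa [linPart, structConst, pd] using this

lemma pd_linPart (π : (Fin m → ℝ) → Matrix (Fin m) (Fin m) ℝ) (x : Fin m → ℝ)
    (l i j : Fin m) : pd l (fun y => linPart π y i j) x = structConst π l i j := by
  have hfe : (fun y => linPart π y i j) = fun y => fderiv ℝ (fun y => π y i j) 0 y := by
    funext y; exact linPart_eq_fderiv π y i j
  rw [pd, hfe]
  rw [(fderiv ℝ (fun y => π y i j) 0).fderiv]
  rfl

/-- Jacobi identity for the structure constants. -/
lemma structConst_jacobi {r : ℝ} (hr : 0 < r) {π : (Fin m → ℝ) → Matrix (Fin m) (Fin m) ℝ}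
    (hπ : IsPoissonOn (Metric.ball (0 : Fin m → ℝ) r) π) (hπ0 : π 0 = 0) (n i j k : Fin m) :
    ∑ l, (structConst π l j k * structConst π n l i
        + structConst π l k i * structConst π n l j
        + structConst π l i j * structConst π n l k) = 0 := by
  have hball : Metric.ball (0 : Fin m → ℝ) r ∈ 𝓝 (0 : Fin m → ℝ) :=
    Metric.isOpen_ball.mem_nhds (Metric.mem_ball_self hr)
  have hdf : ∀ a b : Fin m, DifferentiableAt ℝ (fun y => π y a b) 0 := fun a b =>
    (((hπ.1.1 a b).contDiffAt hball).differentiableAt (by simp))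
  have hdpd : ∀ (a b l : Fin m), DifferentiableAt ℝ (fun x => pd l (fun y => π y a b) x) 0 := by
    intro a b l
    have h1 : ContDiffOn ℝ (⊤ : ℕ∞) (fderiv ℝ (fun y => π y a b)) (Metric.ball 0 r) :=
      (hπ.1.1 a b).fderiv_of_isOpen Metric.isOpen_ball (by simp)
    have h2 : ContDiffAt ℝ (⊤ : ℕ∞) (fderiv ℝ (fun y => π y a b)) 0 := h1.contDiffAt hball
    exact (h2.clm_apply contDiffAt_const).differentiableAt (by simp)
  have hd1 : ∀ l : Fin m, DifferentiableAt ℝ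
      (fun x => π x l i * pd l (fun y => π y j k) x) 0 := fun l => (hdf l i).mul (hdpd j k l)
  have hd2 : ∀ l : Fin m, DifferentiableAt ℝ
      (fun x => π x l j * pd l (fun y => π y k i) x) 0 := fun l => (hdf l j).mul (hdpd k i l)
  have hd3 : ∀ l : Fin m, DifferentiableAt ℝ
      (fun x => π x l k * pd l (fun y => π y i j) x) 0 := fun l => (hdf l k).mul (hdpd i j l)
  have hdterm : ∀ l : Fin m, DifferentiableAt ℝ
      (fun x => π x l i * pd l (fun y => π y j k) x + π x l j * pd l (fun y => π y k i) x
        + π x l k * pd l (fun y => π y i j) x) 0 := fun l => ((hd1 l).add (hd2 l)).add (hd3 l)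
  have hπ00 : ∀ a b : Fin m, π 0 a b = 0 := by intro a b; rw [hπ0]; rfl
  -- the Jacobi sum vanishes near 0
  have hJ : (fun x => ∑ l, (π x l i * pd l (fun y => π y j k) x
      + π x l j * pd l (fun y => π y k i) x + π x l k * pd l (fun y => π y i j) x))
      =ᶠ[𝓝 (0 : Fin m → ℝ)] fun _ => (0:ℝ) :=
    Filter.eventuallyEq_of_mem hball fun x hx => hπ.2 x hx i j k
  have h0 : fderiv ℝ (fun x => ∑ l, (π x l i * pd l (fun y => π y j k) x
      + π x l j * pd l (fun y => π y k i) x + π x l k * pd l (fun y => π y i j) x)) 0 = 0 := by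
    rw [hJ.fderiv_eq]; exact fderiv_const_apply 0
  have hsum := fderiv_fun_sum (u := Finset.univ) (x := (0 : Fin m → ℝ))
    (A := fun (l : Fin m) x => π x l i * pd l (fun y => π y j k) x
      + π x l j * pd l (fun y => π y k i) x + π x l k * pd l (fun y => π y i j) x)
    (fun l _ => hdterm l)
  rw [h0] at hsum
  have happ := congrArg (fun (L : (Fin m → ℝ) →L[ℝ] ℝ) => L (Pi.single n 1)) hsum.symm
  simp only [ContinuousLinearMap.sum_apply, ContinuousLinearMap.zero_apply] at happ
  rw [← happ]
  refine Finset.sum_congr rfl fun l _ => ?_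
  have e1 : fderiv ℝ (fun x => π x l i * pd l (fun y => π y j k) x
      + π x l j * pd l (fun y => π y k i) x + π x l k * pd l (fun y => π y i j) x) 0
      = fderiv ℝ (fun x => π x l i * pd l (fun y => π y j k) x) 0
      + fderiv ℝ (fun x => π x l j * pd l (fun y => π y k i) x) 0
      + fderiv ℝ (fun x => π x l k * pd l (fun y => π y i j) x) 0 := by
    rw [fderiv_fun_add ((hd1 l).fun_add (hd2 l)) (hd3 l), fderiv_fun_add (hd1 l) (hd2 l)]
  have hmul : ∀ (a b : Fin m) (g : (Fin m → ℝ) → ℝ) (hg : DifferentiableAt ℝ g 0),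
      fderiv ℝ (fun x => π x a b * g x) 0 (Pi.single n 1)
        = g 0 * fderiv ℝ (fun y => π y a b) 0 (Pi.single n 1) := by
    intro a b g hg
    rw [fderiv_fun_mul (hdf a b) hg]
    simp [hπ00 a b]
  rw [e1]
  simp only [ContinuousLinearMap.add_apply]
  rw [hmul l i _ (hdpd j k l), hmul l j _ (hdpd k i l), hmul l k _ (hdpd i j l)]
  rfl

end MainProof
/-- **The rescaled path of Poisson structures extends smoothly to its linear part**:
for `π` Poisson on `B(0,r)` with `π(0) = 0`, there is a smooth
`P : Ω → Matrix (Fin m) (Fin m) ℝ` on `Ω = {(t,x) : |t|‖x‖ < r}` with `P(t,x) = π(tx)/t`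
for `t ≠ 0` and `P(0,·) = π_lin`, and every slice `P(t,·)` is a Poisson bivector field. -/
theorem rescaled_path_extends_smoothly {m : ℕ} {r : ℝ} (hr : 0 < r)
    {π : (Fin m → ℝ) → Matrix (Fin m) (Fin m) ℝ}
    (hπ : IsPoissonOn (Metric.ball (0 : Fin m → ℝ) r) π) (hπ0 : π 0 = 0) :
    ∃ P : ℝ → (Fin m → ℝ) → Matrix (Fin m) (Fin m) ℝ,
      (∀ i j, ContDiffOn ℝ (⊤ : ℕ∞) (fun p : ℝ × (Fin m → ℝ) => P p.1 p.2 i j)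
        {p : ℝ × (Fin m → ℝ) | |p.1| * ‖p.2‖ < r}) ∧
      (∀ t : ℝ, t ≠ 0 → ∀ x : Fin m → ℝ, |t| * ‖x‖ < r → ∀ i j,
        P t x i j = π (t • x) i j / t) ∧
      (∀ x : Fin m → ℝ, P 0 x = linPart π x) ∧
      (∀ t : ℝ, IsPoissonOn {x : Fin m → ℝ | |t| * ‖x‖ < r} (P t)) := by
  classical
  have hBopen : IsOpen (Metric.ball (0 : Fin m → ℝ) r) := Metric.isOpen_ball
  have hball : Metric.ball (0 : Fin m → ℝ) r ∈ 𝓝 (0 : Fin m → ℝ) :=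
    hBopen.mem_nhds (Metric.mem_ball_self hr)
  have hπ00 : ∀ a b : Fin m, π 0 a b = 0 := fun a b => by rw [hπ0]; rfl
  set P : ℝ → (Fin m → ℝ) → Matrix (Fin m) (Fin m) ℝ :=
    fun t x => if t = 0 then linPart π x else t⁻¹ • π (t • x) with hPdef
  have hPapply : ∀ (t : ℝ), t ≠ 0 → ∀ (x : Fin m → ℝ) (i j : Fin m),
      P t x i j = π (t • x) i j / t := by
    intro t ht x i j
    simp [hPdef, if_neg ht, Matrix.smul_apply, smul_eq_mul, div_eq_inv_mul]
  have hP0 : ∀ x, P 0 x = linPart π x := by intro x; simp [hPdef]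
  have hmem : ∀ (t : ℝ) (x : Fin m → ℝ), |t| * ‖x‖ < r → t • x ∈ Metric.ball (0:Fin m → ℝ) r := by
    intro t x h
    rw [Metric.mem_ball, dist_zero_right, norm_smul, Real.norm_eq_abs]; exact h
  have hfan : ∀ (i j : Fin m) (y : Fin m → ℝ), y ∈ Metric.ball (0:Fin m → ℝ) r →
      ContDiffAt ℝ ∞ (fun z => π z i j) y :=
    fun i j y hy => (hπ.1.1 i j).contDiffAt (hBopen.mem_nhds hy)
  -- joint smoothness
  have hjoint : ∀ i j, ContDiffOn ℝ (⊤ : ℕ∞) (fun p : ℝ × (Fin m → ℝ) => P p.1 p.2 i j)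
      {p : ℝ × (Fin m → ℝ) | |p.1| * ‖p.2‖ < r} := by
    intro i j q hq
    apply ContDiffAt.contDiffWithinAt
    by_cases ht : q.1 = 0
    · -- t = 0 : use the Hadamard-quotient trick
      obtain ⟨ρ, hρ, F, hF1, hF2, hF3⟩ := hadamard hr (hπ.1.1 i j) (hπ00 i j)
      have hmemq : ‖q.1 • q.2‖ < ρ := by rw [ht, zero_smul, norm_zero]; exact hρ
      have hNopen : IsOpen {p : ℝ × (Fin m → ℝ) | ‖p.1 • p.2‖ < ρ} :=
        isOpen_lt (continuous_fst.smul continuous_snd).norm continuous_const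
      refine (hF1 q hmemq).congr_of_eventuallyEq ?_
      refine Filter.eventuallyEq_of_mem (hNopen.mem_nhds hmemq) fun p hp => ?_
      by_cases hp1 : p.1 = 0
      · have h1 : P p.1 p.2 i j = fderiv ℝ (fun z => π z i j) 0 p.2 := by
          rw [hp1, hP0, linPart_eq_fderiv]
        have h2 : F p = F (0, p.2) := by rw [← hp1]
        rw [h1, h2, hF3]
      · rw [hPapply p.1 hp1 p.2 i j, hF2 p.1 p.2 hp, mul_div_cancel_left₀ _ hp1]
    · -- t ≠ 0
      have hmemq : q.1 • q.2 ∈ Metric.ball (0:Fin m → ℝ) r := hmem q.1 q.2 hq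
      have h1 : ContDiffAt ℝ ∞ (fun p : ℝ × (Fin m → ℝ) => π (p.1 • p.2) i j) q :=
        by have h := (hfan i j _ hmemq).comp q (isBoundedBilinearMap_smul.contDiff.contDiffAt :
          ContDiffAt ℝ ∞ (fun p : ℝ × (Fin m → ℝ) => p.1 • p.2) q); exact h
      have h2 : ContDiffAt ℝ ∞ (fun p : ℝ × (Fin m → ℝ) => π (p.1 • p.2) i j / p.1) q :=
        h1.div contDiffAt_fst ht
      refine h2.congr_of_eventuallyEq ?_
      have hopen : IsOpen {p : ℝ × (Fin m → ℝ) | p.1 ≠ 0} :=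
        isOpen_compl_singleton.preimage continuous_fst
      exact Filter.eventuallyEq_of_mem (hopen.mem_nhds ht) fun p hp => hPapply p.1 hp p.2 i j
  -- antisymmetry of the structure constants
  have hscasym : ∀ k i j : Fin m, structConst π k i j = - structConst π k j i := by
    intro k i j
    have hev : (fun y => π y i j) =ᶠ[𝓝 (0:Fin m → ℝ)] fun y => - π y j i :=
      Filter.eventuallyEq_of_mem hball fun y hy => hπ.1.2 y hy i j
    have hfe : fderiv ℝ (fun y => π y i j) 0 = fderiv ℝ (fun y => - π y j i) 0 := hev.fderiv_eq
    rw [structConst, pd, hfe, fderiv_fun_neg]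
    simp [structConst, pd]
  -- partial derivatives of the slices, t ≠ 0
  have hpdP : ∀ (t : ℝ), t ≠ 0 → ∀ (x : Fin m → ℝ), |t| * ‖x‖ < r → ∀ i j l : Fin m,
      pd l (fun y => P t y i j) x = pd l (fun z => π z i j) (t • x) := by
    intro t ht x hx i j l
    have hfeq : (fun y => P t y i j) = fun y => t⁻¹ * π (t • y) i j := by
      funext y; rw [hPapply t ht y i j, div_eq_inv_mul]
    have hdo : DifferentiableAt ℝ (fun z => π z i j) (t • x) :=
      (hfan i j _ (hmem t x hx)).differentiableAt (by simp)
    have hin : HasFDerivAt (fun y : Fin m → ℝ => t • y)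
        (t • ContinuousLinearMap.id ℝ (Fin m → ℝ)) x := (hasFDerivAt_id x).const_smul t
    have hcomp : HasFDerivAt (fun y => π (t • y) i j)
        ((fderiv ℝ (fun z => π z i j) (t • x)).comp
          (t • ContinuousLinearMap.id ℝ (Fin m → ℝ))) x := hdo.hasFDerivAt.comp x hin
    have hmul : HasFDerivAt (fun y => t⁻¹ * π (t • y) i j)
        (t⁻¹ • ((fderiv ℝ (fun z => π z i j) (t • x)).comp
          (t • ContinuousLinearMap.id ℝ (Fin m → ℝ)))) x := hcomp.const_mul t⁻¹
    rw [pd, hfeq, hmul.fderiv]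
    simp only [ContinuousLinearMap.smul_apply, ContinuousLinearMap.coe_comp',
      Function.comp_apply, ContinuousLinearMap.id_apply, map_smul, smul_eq_mul]
    rw [pd, ← mul_assoc, inv_mul_cancel₀ ht, one_mul]
  -- slice smoothness
  have hslice : ∀ (t : ℝ) (i j : Fin m),
      ContDiffOn ℝ (⊤ : ℕ∞) (fun x => P t x i j) {x : Fin m → ℝ | |t| * ‖x‖ < r} := by
    intro t i j
    have hmap : Set.MapsTo (fun x : Fin m → ℝ => (t, x)) {x : Fin m → ℝ | |t| * ‖x‖ < r}
        {p : ℝ × (Fin m → ℝ) | |p.1| * ‖p.2‖ < r} := fun x hx => hx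
    exact (hjoint i j).comp ((contDiff_const.prodMk contDiff_id).contDiffOn) hmap
  refine ⟨P, hjoint, fun t ht x _ i j => hPapply t ht x i j, hP0, fun t => ?_⟩
  refine ⟨⟨fun i j => hslice t i j, ?_⟩, ?_⟩
  · -- antisymmetry
    intro x hx i j
    by_cases ht : t = 0
    · subst ht
      rw [show P 0 = linPart π from funext hP0]
      show ∑ n, structConst π n i j * x n = - ∑ n, structConst π n j i * x n
      rw [← Finset.sum_neg_distrib]
      exact Finset.sum_congr rfl fun n _ => by rw [hscasym n i j]; ring
    · rw [hPapply t ht x i j, hPapply t ht x j i, hπ.1.2 (t • x) (hmem t x hx) i j, neg_div]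
  · -- Jacobi identity
    intro x hx i j k
    by_cases ht : t = 0
    · subst ht
      rw [show P 0 = linPart π from funext hP0]
      have hpd0 : ∀ (a b l : Fin m), pd l (fun y => linPart π y a b) x = structConst π l a b :=
        fun a b l => pd_linPart π x l a b
      have hP0e : ∀ a b : Fin m, linPart π x a b = ∑ n, structConst π n a b * x n :=
        fun a b => rfl
      show ∑ l, (linPart π x l i * pd l (fun y => linPart π y j k) x
            + linPart π x l j * pd l (fun y => linPart π y k i) x
            + linPart π x l k * pd l (fun y => linPart π y i j) x) = 0
      calc ∑ l, (linPart π x l i * pd l (fun y => linPart π y j k) x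
            + linPart π x l j * pd l (fun y => linPart π y k i) x
            + linPart π x l k * pd l (fun y => linPart π y i j) x)
          = ∑ l, ∑ n, x n * (structConst π l j k * structConst π n l i
              + structConst π l k i * structConst π n l j
              + structConst π l i j * structConst π n l k) := by
            refine Finset.sum_congr rfl fun l _ => ?_
            rw [hpd0 j k l, hpd0 k i l, hpd0 i j l, hP0e l i, hP0e l j, hP0e l k,
              Finset.sum_mul, Finset.sum_mul, Finset.sum_mul, ← Finset.sum_add_distrib,
              ← Finset.sum_add_distrib]
            exact Finset.sum_congr rfl fun n _ => by ring
        _ = ∑ n, x n * ∑ l, (structConst π l j k * structConst π n l i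
              + structConst π l k i * structConst π n l j
              + structConst π l i j * structConst π n l k) := by
            rw [Finset.sum_comm]
            exact Finset.sum_congr rfl fun n _ => (Finset.mul_sum _ _ _).symm
        _ = 0 := by
            simp only [structConst_jacobi hr hπ hπ0, mul_zero, Finset.sum_const_zero]
    · have hjac := hπ.2 (t • x) (hmem t x hx) i j k
      calc ∑ l, (P t x l i * pd l (fun y => P t y j k) x
            + P t x l j * pd l (fun y => P t y k i) x
            + P t x l k * pd l (fun y => P t y i j) x)
          = ∑ l, t⁻¹ * (π (t • x) l i * pd l (fun z => π z j k) (t • x)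
              + π (t • x) l j * pd l (fun z => π z k i) (t • x)
              + π (t • x) l k * pd l (fun z => π z i j) (t • x)) := by
            refine Finset.sum_congr rfl fun l _ => ?_
            rw [hPapply t ht x l i, hPapply t ht x l j, hPapply t ht x l k,
              hpdP t ht x hx j k l, hpdP t ht x hx k i l, hpdP t ht x hx i j l]
            ring
        _ = t⁻¹ * ∑ l, (π (t • x) l i * pd l (fun z => π z j k) (t • x)
              + π (t • x) l j * pd l (fun z => π z k i) (t • x)
              + π (t • x) l k * pd l (fun z => π z i j) (t • x)) := (Finset.mul_sum _ _ _).symm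
        _ = 0 := by rw [hjac, mul_zero]
end

section
/- Properties of a primitive of the cocycle π̇₁: Let π be a Poisson bivector field on an open set U ⊆ ℝ^m with 0 ∈ U and π(0) = 0, and suppose the isotropy Lie algebra 𝔤 of π at 0 satisfies [𝔤,𝔤] = 𝔤 (the brackets [a,b], a,b ∈ 𝔤, span ℝ^m). Let Y be a smooth vector field on U with −L_Y π = π̇₁ on U. Then: (1) Y(0) = 0; and (2) the linearization Y₀ of Y at the origin, i.e. the linear vector field Y₀(x) = DY(0)·x, satisfies L_{Y₀} π_lin = 0 on ℝ^m (equivalently, Y₀ is a 1-cocycle for the coadjoint representation of 𝔤). -/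
open scoped Topology

section Aux

open ContinuousLinearMap

variable {m : ℕ}

lemma diffAt_pd {f : (Fin m → ℝ) → ℝ} (hf : ContDiffAt ℝ (⊤ : ℕ∞) f 0) (l : Fin m) :
    DifferentiableAt ℝ (pd l f) 0 := by
  have h2 : DifferentiableAt ℝ (fderiv ℝ f) 0 :=
    (hf.fderiv_right (m := 1) (by change ((1 + 1 : ℕ∞) : WithTop ℕ∞) ≤ _; exact WithTop.coe_le_coe.mpr le_top)).differentiableAt one_ne_zero
  exact (ContinuousLinearMap.apply ℝ ℝ (Pi.single l 1)).differentiableAt.comp 0 h2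

end Aux

/-- **Properties of a primitive of the cocycle `π̇₁`**: if `[𝔤,𝔤] = 𝔤` and `Y` is a smooth
vector field on `U` with `-L_Y π = π̇₁`, then `Y(0) = 0` and the linearization
`Y₀(x) = DY(0)·x` of `Y` at the origin satisfies `L_{Y₀} π_lin = 0`, i.e. `Y₀` is a
1-cocycle for the coadjoint representation of `𝔤`. -/
theorem primitive_of_piDot_properties {m : ℕ} {U : Set (Fin m → ℝ)}
    {π : (Fin m → ℝ) → Matrix (Fin m) (Fin m) ℝ}
    (hU : IsOpen U) (h0 : (0 : Fin m → ℝ) ∈ U)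
    (hπ : IsPoissonOn U π) (hπ0 : π 0 = 0)
    (hH1 : Submodule.span ℝ {x : Fin m → ℝ | ∃ a b, x = isoBracket π a b} = ⊤)
    (Y : (Fin m → ℝ) → (Fin m → ℝ)) (hYsmooth : ContDiffOn ℝ (⊤ : ℕ∞) Y U)
    (hY : ∀ x ∈ U, ∀ i j, - lieDeriv Y π x i j = piDot π x i j) :
    Y 0 = 0 ∧
    ∀ (x : Fin m → ℝ) (i j : Fin m),
      lieDeriv (fun z => fderiv ℝ Y 0 z) (linPart π) x i j = 0 := by
  classical
  obtain ⟨⟨hπs, hπa⟩, hπJ⟩ := hπ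
  have hUn : U ∈ 𝓝 (0 : Fin m → ℝ) := hU.mem_nhds h0
  -- Part 1 : `Y 0 = 0`
  have hlin0 : ∀ i j, ∑ l, Y 0 l * pd l (fun y => π y i j) 0 = 0 := by
    intro i j
    have h := hY 0 h0 i j
    have hp : piDot π 0 i j = 0 := by simp [piDot, hπ0]
    have hl : lieDeriv Y π 0 i j = ∑ l, Y 0 l * pd l (fun y => π y i j) 0 := by
      simp [lieDeriv, hπ0]
    rw [hp, hl] at h
    exact neg_eq_zero.mp h
  have hY0 : Y 0 = 0 := by
    let φ : (Fin m → ℝ) →ₗ[ℝ] ℝ :=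
      { toFun := fun v => ∑ k, Y 0 k * v k
        map_add' := fun v w => by simp [mul_add, Finset.sum_add_distrib]
        map_smul' := fun c v => by
          simp only [smul_eq_mul, RingHom.id_apply, Pi.smul_apply, Finset.mul_sum]
          exact Finset.sum_congr rfl fun k _ => by ring }
    have hker : {x : Fin m → ℝ | ∃ a b, x = isoBracket π a b} ⊆
        (LinearMap.ker φ : Submodule ℝ (Fin m → ℝ)) := by
      rintro x ⟨a, b, rfl⟩
      have hφ : φ (isoBracket π a b)
          = ∑ i, ∑ j, ∑ k, a i * b j * (Y 0 k * pd k (fun y => π y i j) 0) := by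
        show ∑ k, Y 0 k * isoBracket π a b k = _
        simp only [isoBracket, structConst, Finset.mul_sum]
        rw [Finset.sum_comm]
        refine Finset.sum_congr rfl fun i _ => ?_
        rw [Finset.sum_comm]
        refine Finset.sum_congr rfl fun j _ => ?_
        exact Finset.sum_congr rfl fun k _ => by ring
      have : φ (isoBracket π a b) = 0 := by
        rw [hφ]
        refine Finset.sum_eq_zero fun i _ => Finset.sum_eq_zero fun j _ => ?_
        rw [← Finset.mul_sum, hlin0 i j, mul_zero]
      simpa [LinearMap.mem_ker] using this
    have hle : (⊤ : Submodule ℝ (Fin m → ℝ)) ≤ LinearMap.ker φ := by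
      have h := Submodule.span_le.mpr hker
      rwa [hH1] at h
    have hφY : ∑ k, Y 0 k * Y 0 k = 0 := hle (Submodule.mem_top (x := Y 0))
    funext k
    have hk := (Finset.sum_eq_zero_iff_of_nonneg
      (fun k _ => mul_self_nonneg (Y 0 k))).mp hφY k (Finset.mem_univ k)
    exact mul_self_eq_zero.mp hk
  -- Part 2 : setup of derivatives at 0
  set A := fderiv ℝ Y 0 with hAdef
  have hYc : ContDiffAt ℝ (⊤ : ℕ∞) Y 0 := hYsmooth.contDiffAt hUn
  have hYfd : HasFDerivAt Y A 0 := (hYc.differentiableAt (by simp)).hasFDerivAt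
  have hYi : ∀ i, HasFDerivAt (fun x => Y x i) ((ContinuousLinearMap.proj i).comp A) 0 :=
    hasFDerivAt_pi'.mp hYfd
  have hYci : ∀ i, ContDiffAt ℝ (⊤ : ℕ∞) (fun x => Y x i) 0 := fun i =>
    ((ContinuousLinearMap.proj (R := ℝ) (φ := fun _ : Fin m => ℝ) i).contDiff.contDiffAt).comp
      0 hYc
  have hπc : ∀ i j, ContDiffAt ℝ (⊤ : ℕ∞) (fun x => π x i j) 0 := fun i j =>
    (hπs i j).contDiffAt hUn
  have hπfd : ∀ i j, HasFDerivAt (fun x => π x i j)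
      (fderiv ℝ (fun x => π x i j) 0) 0 := fun i j =>
    ((hπc i j).differentiableAt (by simp)).hasFDerivAt
  have hpdπ : ∀ (l i j : Fin m), HasFDerivAt (pd l (fun y => π y i j))
      (fderiv ℝ (pd l (fun y => π y i j)) 0) 0 := fun l i j =>
    (diffAt_pd (hπc i j) l).hasFDerivAt
  have hpdY : ∀ (i l : Fin m), HasFDerivAt (pd l (fun y => Y y i))
      (fderiv ℝ (pd l (fun y => Y y i)) 0) 0 := fun i l =>
    (diffAt_pd (hYci i) l).hasFDerivAt
  have hpdY0 : ∀ (i l : Fin m), pd l (fun y => Y y i) 0 = A (Pi.single l 1) i := by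
    intro i l
    show fderiv ℝ (fun y => Y y i) 0 (Pi.single l 1) = _
    rw [(hYi i).fderiv]
    rfl
  -- key identity obtained by differentiating `-L_Y π = π̇₁` at `0`
  have key : ∀ i j p, ∑ l, (pd l (fun y => π y i j) 0 * A (Pi.single p 1) l
      - A (Pi.single l 1) i * pd p (fun y => π y l j) 0
      - A (Pi.single l 1) j * pd p (fun y => π y i l) 0) = 0 := by
    intro i j p
    have hFd := HasFDerivAt.fun_sum (u := (Finset.univ : Finset (Fin m)))
      (x := (0 : Fin m → ℝ))
      (fun l _ =>
        (((hYi l).mul (hpdπ l i j)).sub ((hπfd l j).mul (hpdY i l))).sub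
          ((hπfd i l).mul (hpdY j l)))
    have hGd := (HasFDerivAt.fun_sum (u := (Finset.univ : Finset (Fin m)))
      (x := (0 : Fin m → ℝ))
      (fun k _ => (hasFDerivAt_apply k (0 : Fin m → ℝ)).mul (hpdπ k i j))).sub
        (hπfd i j)
    have heq : (fun x => ∑ l, (Y x l * pd l (fun y => π y i j) x
        - π x l j * pd l (fun y => Y y i) x - π x i l * pd l (fun y => Y y j) x))
        =ᶠ[𝓝 (0 : Fin m → ℝ)]
        (fun x => -((∑ k, x k * pd k (fun y => π y i j) x) - π x i j)) := by
      filter_upwards [hUn] with x hx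
      have h := hY x hx i j
      show lieDeriv Y π x i j = -(piDot π x i j)
      rw [← h, neg_neg]
    have hFd' := (hGd.neg).congr_of_eventuallyEq heq
    have huniq := hFd.unique hFd'
    have hv := congrArg (fun L : (Fin m → ℝ) →L[ℝ] ℝ => L (Pi.single p 1)) huniq
    simp only [ContinuousLinearMap.sum_apply, ContinuousLinearMap.sub_apply,
      ContinuousLinearMap.add_apply, ContinuousLinearMap.smul_apply,
      ContinuousLinearMap.neg_apply, ContinuousLinearMap.coe_comp', Function.comp_apply,
      ContinuousLinearMap.proj_apply, smul_eq_mul, hY0, hπ0, Matrix.zero_apply,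
      Pi.zero_apply, zero_mul, mul_zero, zero_add, add_zero, sub_zero, zero_sub,
      hpdY0, Pi.single_apply, mul_ite, mul_one, Finset.sum_ite_eq', Finset.mem_univ,
      if_true, sub_self, neg_zero, neg_neg] at hv
    simp only [pd] at hv ⊢
    convert hv using 2 with l
    ring
  -- conclusion
  refine ⟨hY0, ?_⟩
  intro x i j
  have hApd : ∀ (i l : Fin m) (x : Fin m → ℝ),
      pd l (fun y => A y i) x = A (Pi.single l 1) i := by
    intro i l x
    show fderiv ℝ (fun y => A y i) x (Pi.single l 1) = _
    have h : HasFDerivAt (fun y => A y i)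
        ((ContinuousLinearMap.proj i).comp A) x :=
      ((ContinuousLinearMap.proj i).comp A).hasFDerivAt
    rw [h.fderiv]
    rfl
  have hlinpd : ∀ (i j l : Fin m) (x : Fin m → ℝ),
      pd l (fun y => linPart π y i j) x = pd l (fun y => π y i j) 0 := by
    intro i j l x
    have h : HasFDerivAt (fun y : Fin m → ℝ => ∑ k, structConst π k i j * y k)
        (∑ k, structConst π k i j • ContinuousLinearMap.proj k) x :=
      HasFDerivAt.fun_sum fun k _ => (hasFDerivAt_apply (𝕜 := ℝ) (F' := fun _ : Fin m => ℝ) k x).const_mul (structConst π k i j)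
    show fderiv ℝ (fun y => linPart π y i j) x (Pi.single l 1) = _
    have hfe : fderiv ℝ (fun y => linPart π y i j) x
        = ∑ k, structConst π k i j • ContinuousLinearMap.proj k := h.fderiv
    rw [hfe]
    simp [Pi.single_apply, mul_ite, Finset.sum_ite_eq', structConst]
  have hAx : ∀ (x : Fin m → ℝ) (l : Fin m),
      A x l = ∑ p, x p * A (Pi.single p 1) l := by
    intro x l
    have hx : x = ∑ p, x p • (Pi.single p 1 : Fin m → ℝ) := by
      funext q
      simp [Finset.sum_apply, Pi.single_apply, Finset.sum_ite_eq']
    conv_lhs => rw [hx]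
    rw [map_sum]
    simp [Finset.sum_apply, map_smul]
  show (∑ l, ((fun z => A z) x l * pd l (fun y => linPart π y i j) x
      - linPart π x l j * pd l (fun y => (fun z => A z) y i) x
      - linPart π x i l * pd l (fun y => (fun z => A z) y j) x)) = 0
  simp only [hApd, hlinpd]
  simp only [linPart, Matrix.of_apply, structConst]
  calc ∑ l, (A x l * pd l (fun y => π y i j) 0
        - (∑ p, pd p (fun y => π y l j) 0 * x p) * A (Pi.single l 1) i
        - (∑ p, pd p (fun y => π y i l) 0 * x p) * A (Pi.single l 1) j)
      = ∑ l, ∑ p, x p * (pd l (fun y => π y i j) 0 * A (Pi.single p 1) l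
          - A (Pi.single l 1) i * pd p (fun y => π y l j) 0
          - A (Pi.single l 1) j * pd p (fun y => π y i l) 0) := by
        refine Finset.sum_congr rfl fun l _ => ?_
        rw [hAx x l, Finset.sum_mul, Finset.sum_mul, Finset.sum_mul,
          ← Finset.sum_sub_distrib, ← Finset.sum_sub_distrib]
        exact Finset.sum_congr rfl fun p _ => by ring
    _ = 0 := by
        rw [Finset.sum_comm]
        refine Finset.sum_eq_zero fun p _ => ?_
        rw [← Finset.mul_sum, key i j p, mul_zero]
end
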